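/- Every antisymmetric real 7×7 matrix α decomposes uniquely as α = ρ_φ(ω) + β, where ω ∈ ℝ⁷, ρ_φ(ω) is the antisymmetric matrix with entries ρ_φ(ω)_{bc} = Σ_a ω_a φ₀_{abc}, and β is an antisymmetric matrix satisfying Σ_{b,c} φ₀_{abc} β_{bc} = 0 for every a. (This is the G₂-invariant decomposition 𝔰𝔬(7) = 𝔤₂ ⊕ ρ_φ(ℝ⁷), i.e. Λ² = Λ²₇ ⊕ Λ²₁₄.) -/

import Mathlib

open scoped BigOperators

noncomputable section

/-- Kronecker delta `δ` on `Fin 7`. -/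
def kd (a b : Fin 7) : ℝ := if a = b then 1 else 0

/-- The elementary alternating 3-tensor supported on permutations of `(i, j, k)`. -/
def trip (i j k a b c : Fin 7) : ℝ :=
  (if a = i ∧ b = j ∧ c = k then (1 : ℝ) else 0)
    + (if a = j ∧ b = k ∧ c = i then (1 : ℝ) else 0)
    + (if a = k ∧ b = i ∧ c = j then (1 : ℝ) else 0)
    - (if a = i ∧ b = k ∧ c = j then (1 : ℝ) else 0)
    - (if a = k ∧ b = j ∧ c = i then (1 : ℝ) else 0)
    - (if a = j ∧ b = i ∧ c = k then (1 : ℝ) else 0)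

/-- The standard `G₂` 3-form `φ₀` on `ℝ⁷`.  Indices `0, …, 6` correspond to the
paper's `1, …, 7`, so this is
`e^{123} + e^{145} + e^{167} + e^{246} - e^{257} - e^{347} - e^{356}`. -/
def phi0 (a b c : Fin 7) : ℝ :=
  trip 0 1 2 a b c + trip 0 3 4 a b c + trip 0 5 6 a b c + trip 1 3 5 a b c
    - trip 1 4 6 a b c - trip 2 3 6 a b c - trip 2 4 5 a b c

/-- The totally antisymmetric Levi-Civita symbol `ε̂` on seven indices,
with `ε̂_{1234567} = 1`. -/
def eps7 (a b c d e f g : Fin 7) : ℝ :=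
  if h : Function.Bijective ![a, b, c, d, e, f, g] then
    ((Equiv.Perm.sign (Equiv.ofBijective _ h) : ℤ) : ℝ)
  else 0

/-- The 4-form `ψ₀ = ⋆φ₀`, the Euclidean Hodge dual of `φ₀`:
`ψ₀ = e^{4567} + e^{2367} + e^{2345} + e^{1357} - e^{1346} - e^{1256} - e^{1247}`. -/
def psi0 (m n p q : Fin 7) : ℝ :=
  (1 / 6 : ℝ) * ∑ r, ∑ s, ∑ t, eps7 m n p q r s t * phi0 r s t

/-! The contraction identity `φ₀_{abc} φ₀_{dbc} = 6 δ_{ad}` says that contracting with `φ₀`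
is a left inverse of `6⁻¹ • ρ_φ`. Hence `ω = 6⁻¹ Σ_{bc} φ₀_{abc} α_{bc}` is forced, `β = α - ρ_φ(ω)`
is then determined, and this pair works because `ρ_φ(ω)` is antisymmetric. -/

namespace ThreeTensor

variable {ι K : Type*} [Fintype ι] [Field K] (φ : ι → ι → ι → K)

def rho (ω : ι → K) : Matrix ι ι K := Matrix.of fun b c => ∑ a, ω a * φ a b c

def contract (β : Matrix ι ι K) : ι → K := fun a => ∑ b, ∑ c, φ a b c * β b c

lemma contract_add (β γ : Matrix ι ι K) :
    contract φ (β + γ) = contract φ β + contract φ γ := by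
  ext a
  simp only [contract, Matrix.add_apply, mul_add, Finset.sum_add_distrib, Pi.add_apply]

lemma contract_sub (β γ : Matrix ι ι K) :
    contract φ (β - γ) = contract φ β - contract φ γ := by
  ext a
  simp only [contract, Matrix.sub_apply, mul_sub, Finset.sum_sub_distrib, Pi.sub_apply]

variable {φ}

lemma rho_transpose (hφ : ∀ a b c, φ a c b = -φ a b c) (ω : ι → K) :
    (rho φ ω).transpose = -rho φ ω := by
  ext b c
  simp only [Matrix.transpose_apply, Matrix.neg_apply, rho, Matrix.of_apply,
    ← Finset.sum_neg_distrib]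
  exact Finset.sum_congr rfl fun a _ => by rw [hφ, mul_neg]

lemma contract_rho [DecidableEq ι] {k : K}
    (hφ : ∀ a d, ∑ b, ∑ c, φ a b c * φ d b c = if a = d then k else 0) (ω : ι → K) :
    contract φ (rho φ ω) = k • ω := by
  ext a
  calc contract φ (rho φ ω) a = ∑ d, ω d * ∑ b, ∑ c, φ a b c * φ d b c := by
        simp only [contract, rho, Matrix.of_apply, Finset.mul_sum]
        symm
        rw [Finset.sum_comm]
        refine Finset.sum_congr rfl fun b _ => ?_
        rw [Finset.sum_comm]
        exact Finset.sum_congr rfl fun c _ => Finset.sum_congr rfl fun d _ => by ring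
    _ = (k • ω) a := by simp [hφ, mul_comm]

theorem existsUnique_rho_add [DecidableEq ι] {k : K} (hk : k ≠ 0)
    (hswap : ∀ a b c, φ a c b = -φ a b c)
    (hcontr : ∀ a d, ∑ b, ∑ c, φ a b c * φ d b c = if a = d then k else 0)
    (α : Matrix ι ι K) (hα : α.transpose = -α) :
    ∃! p : (ι → K) × Matrix ι ι K,
      p.2.transpose = -p.2 ∧ (∀ a, ∑ b, ∑ c, φ a b c * p.2 b c = 0) ∧
      ∀ b c, α b c = (∑ a, p.1 a * φ a b c) + p.2 b c := by
  have hcontract : ∀ β, (∀ a, ∑ b, ∑ c, φ a b c * β b c = 0) ↔ contract φ β = 0 :=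
    fun β => funext_iff.symm
  have hdecomp : ∀ ω β, (∀ b c, α b c = (∑ a, ω a * φ a b c) + β b c) ↔ α = rho φ ω + β :=
    fun ω β => by rw [← Matrix.ext_iff]; rfl
  simp only [hcontract, hdecomp]
  obtain ⟨ω, hω⟩ : ∃ ω, ω = k⁻¹ • contract φ α := ⟨_, rfl⟩
  refine ⟨(ω, α - rho φ ω), ⟨?_, ?_, by simp⟩, ?_⟩
  · rw [Matrix.transpose_sub, hα, rho_transpose hswap, sub_neg_eq_add, neg_add_eq_sub, neg_sub]
  · rw [contract_sub, contract_rho hcontr, hω, smul_inv_smul₀ hk, sub_self]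
  · rintro ⟨ω', β'⟩ ⟨-, hβ', rfl⟩
    dsimp only at hβ' ⊢
    have hω' : ω' = ω := by
      rw [hω, contract_add, contract_rho hcontr, hβ', add_zero, inv_smul_smul₀ hk]
    simp [hω']

end ThreeTensor

/-! `φ₀` has integer entries, so its identities are checked by `decide` on an integer copy. -/

def tripZ (i j k a b c : Fin 7) : ℤ :=
  (if a = i ∧ b = j ∧ c = k then (1 : ℤ) else 0)
    + (if a = j ∧ b = k ∧ c = i then (1 : ℤ) else 0)
    + (if a = k ∧ b = i ∧ c = j then (1 : ℤ) else 0)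
    - (if a = i ∧ b = k ∧ c = j then (1 : ℤ) else 0)
    - (if a = k ∧ b = j ∧ c = i then (1 : ℤ) else 0)
    - (if a = j ∧ b = i ∧ c = k then (1 : ℤ) else 0)

def phiZ (a b c : Fin 7) : ℤ :=
  tripZ 0 1 2 a b c + tripZ 0 3 4 a b c + tripZ 0 5 6 a b c + tripZ 1 3 5 a b c
    - tripZ 1 4 6 a b c - tripZ 2 3 6 a b c - tripZ 2 4 5 a b c

lemma phi0_eq_cast_phiZ (a b c : Fin 7) : phi0 a b c = phiZ a b c := by
  simp only [phi0, phiZ, trip, tripZ]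
  push_cast [apply_ite (Int.cast : ℤ → ℝ)]
  ring

lemma phi0_swap (a b c : Fin 7) : phi0 a c b = -phi0 a b c := by
  have hZ : ∀ a b c : Fin 7, phiZ a c b = -phiZ a b c := by decide
  rw [phi0_eq_cast_phiZ, phi0_eq_cast_phiZ, hZ, Int.cast_neg]

lemma phi0_contract (a d : Fin 7) :
    ∑ b, ∑ c, phi0 a b c * phi0 d b c = if a = d then 6 else 0 := by
  have hZ : ∀ a d : Fin 7,
      ∑ b, ∑ c, phiZ a b c * phiZ d b c = if a = d then 6 else 0 := by decide
  simp only [phi0_eq_cast_phiZ, ← Int.cast_mul, ← Int.cast_sum, hZ]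
  split_ifs <;> norm_num

/-- Every antisymmetric real `7 × 7` matrix `α` decomposes uniquely as
`α = ρ_φ(ω) + β` with `ω ∈ ℝ⁷`, `ρ_φ(ω)_{bc} = Σ_a ω_a φ₀_{abc}`, and `β` antisymmetric
with `Σ_{b,c} φ₀_{abc} β_{bc} = 0` for every `a`; i.e. `𝔰𝔬(7) = 𝔤₂ ⊕ ρ_φ(ℝ⁷)`. -/
theorem so7_decomposition (α : Matrix (Fin 7) (Fin 7) ℝ) (hα : α.transpose = -α) :
    ∃! p : (Fin 7 → ℝ) × Matrix (Fin 7) (Fin 7) ℝ,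
      p.2.transpose = -p.2 ∧
      (∀ a, ∑ b, ∑ c, phi0 a b c * p.2 b c = 0) ∧
      ∀ b c, α b c = (∑ a, p.1 a * phi0 a b c) + p.2 b c :=
  ThreeTensor.existsUnique_rho_add (by norm_num) phi0_swap phi0_contract α hα
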